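/- Norm estimate for the correlation solution: if each f_{|X|} satisfies ‖f_{|X|}‖₁ ≤ c for a constant c ≥ 1, then ‖(𝔄_t(f))_n‖₁ ≤ Σ_{m=1}^{n} S(n,m) c^m Σ_{k=1}^{m} k^{m−1} ≤ n! e^{3n} c^n, where S(n,m) are Stirling numbers of the second kind. In particular (𝔄_t(f))_n is trace class for all t. -/

import Mathlib

/-!
Every summand of `(𝔄_t f)(Y)` indexed by `P` and `Q` has norm at most `(|Q| - 1)! c^|P|`: the
sign and factorial contribute `(|Q| - 1)!`, the evolutions are contractions, and the factors
`f X` are indexed by the blocks of `P`. Partitions of an `m`-set into `k` blocks, together with a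
numbering of the blocks, inject into the colourings with `k` colours, so `S(m,k) k! ≤ k^m`.
Summing `(|Q| - 1)!` over the partitions `Q` of the `m` blocks of `P` therefore gives at most
`∑_k k^(m-1)`, and grouping the `P` by their number of blocks gives the first bound. For the
second, `∑_k k^(m-1) ≤ m^m` and `S(n,m) m^m ≤ m^n m^m / m! ≤ n^n e^m ≤ n! e^(2n)`, and there are
`n ≤ e^n` values of `m`.
-/

open Finset

/-- The Stirling number of the second kind `S(n,k)`. -/
noncomputable def stirling (n k : ℕ) : ℕ :=
  Fintype.card {P : Finpartition (Finset.range n) // P.parts.card = k}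

/-- The nonlinear cumulant dynamics (see the von Neumann hierarchy solution):
`(𝔄_t(f))(Y) = Σ_{P} Σ_{P'} (−1)^{|P'|−1}(|P'|−1)! Π_k G(θ(Z_k))(−t)(Π_{X∈Z_k} f X)`. -/
noncomputable def clusterCumulantMap {α A : Type*} [DecidableEq α] [NormedCommRing A]
    (G : Finset α → ℝ → (A →+ A)) (t : ℝ) (f : Finset α → A) (Y : Finset α) : A :=
  ∑ P : Finpartition Y, ∑ Q : Finpartition P.parts,
    ((-1 : A) ^ (Q.parts.card - 1) * ((Q.parts.card - 1).factorial : A)) *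
      ∏ Z ∈ Q.parts, G (Z.sup id) t (∏ X ∈ Z, f X)

open scoped Nat

namespace Finpartition

variable {α β : Type*} [DecidableEq α] {s : Finset α}

theorem ext_of_part_eq {P Q : Finpartition s} (h : ∀ a ∈ s, P.part a = Q.part a) : P = Q := by
  ext t
  constructor
  · intro ht
    obtain ⟨a, ha, rfl⟩ := P.part_surjOn ht
    exact h a ha ▸ Q.part_mem.2 ha
  · intro ht
    obtain ⟨a, ha, rfl⟩ := Q.part_surjOn ht
    exact (h a ha).symm ▸ P.part_mem.2 ha

theorem card_parts_mem_Icc (hs : s.Nonempty) (P : Finpartition s) : #P.parts ∈ Icc 1 #s :=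
  mem_Icc.2 ⟨card_pos.2 (P.parts_nonempty hs.ne_empty), P.card_parts_le_card⟩

theorem sum_comp_card_parts {M : Type*} [AddCommMonoid M] (hs : s.Nonempty) (F : ℕ → M) :
    ∑ P : Finpartition s, F #P.parts =
      ∑ m ∈ Icc 1 #s, #{P : Finpartition s | #P.parts = m} • F m := by
  rw [← sum_fiberwise_of_maps_to' (fun P _ ↦ card_parts_mem_Icc hs P)]
  simp only [sum_const]

theorem card_filter_card_parts_mul_factorial_le (s : Finset α) (k : ℕ) :
    #{P : Finpartition s | #P.parts = k} * k ! ≤ k ^ #s := by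
  let colour (P : {P : Finpartition s // #P.parts = k}) (σ : Equiv.Perm (Fin k)) (a : s) :
      Fin k :=
    σ (P.1.parts.equivFinOfCardEq P.2 ⟨P.1.part a, P.1.part_mem.2 a.2⟩)
  have colour_eq_iff :
      ∀ P σ (a b : s), colour P σ a = colour P σ b ↔ P.1.part a = P.1.part b := by
    intro P σ a b
    simp [colour, Subtype.ext_iff]
  have colour_injective : Function.Injective fun Pσ : _ × _ ↦ colour Pσ.1 Pσ.2 := by
    rintro ⟨P, σ⟩ ⟨Q, τ⟩ (h : colour P σ = colour Q τ)
    have hPQ : P = Q := by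
      refine Subtype.ext (ext_of_part_eq fun a ha ↦ ?_)
      ext b
      by_cases hb : b ∈ s
      · rw [P.1.mem_part_iff_part_eq_part hb ha, Q.1.mem_part_iff_part_eq_part hb ha,
          ← colour_eq_iff P σ ⟨b, hb⟩ ⟨a, ha⟩, ← colour_eq_iff Q τ ⟨b, hb⟩ ⟨a, ha⟩, h]
      · exact iff_of_false (hb <| P.1.part_subset a ·) (hb <| Q.1.part_subset a ·)
    subst hPQ
    suffices σ = τ by rw [this]
    ext j
    set e := P.1.parts.equivFinOfCardEq P.2
    obtain ⟨a, ha⟩ := P.1.nonempty_of_mem_parts (e.symm j).2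
    have has : a ∈ s := P.1.le (e.symm j).2 ha
    have hj : e ⟨P.1.part a, P.1.part_mem.2 has⟩ = j := by
      rw [← e.apply_symm_apply j]
      exact congrArg e (Subtype.ext (P.1.part_eq_of_mem (e.symm j).2 ha))
    simpa [colour, e, hj] using congrArg Fin.val (congrFun h ⟨a, has⟩)
  simpa [Fintype.card_subtype, Fintype.card_perm] using
    Fintype.card_le_of_injective _ colour_injective

theorem sum_factorial_card_parts_sub_one_le (hs : s.Nonempty) :
    ∑ P : Finpartition s, (#P.parts - 1)! ≤ ∑ k ∈ Icc 1 #s, k ^ (#s - 1) := by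
  rw [sum_comp_card_parts hs fun k ↦ (k - 1)!]
  refine sum_le_sum fun k hk ↦ Nat.le_of_mul_le_mul_right ?_ (mem_Icc.1 hk).1
  calc #{P : Finpartition s | #P.parts = k} • (k - 1)! * k
      = #{P : Finpartition s | #P.parts = k} * k ! := by
        rw [smul_eq_mul, mul_assoc, mul_comm _ k,
          Nat.mul_factorial_pred (Nat.one_le_iff_ne_zero.1 (mem_Icc.1 hk).1)]
    _ ≤ k ^ #s := card_filter_card_parts_mul_factorial_le s k
    _ = k ^ (#s - 1) * k := by rw [← pow_succ, Nat.sub_add_cancel (card_pos.2 hs)]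

def imageOfInjOn [DecidableEq β] (P : Finpartition s) (g : α → β) (hg : Set.InjOn g s) :
    Finpartition (s.image g) :=
  ofExistsUnique (P.parts.image (·.image g))
    (by
      simp only [mem_image, forall_exists_index, and_imp, forall_apply_eq_imp_iff₂]
      exact fun p hp ↦ image_subset_image (P.le hp))
    (by
      simp only [mem_image, forall_exists_index, and_imp, forall_apply_eq_imp_iff₂]
      intro a ha
      refine ⟨(P.part a).image g,
        ⟨⟨P.part a, P.part_mem.2 ha, rfl⟩, mem_image_of_mem g (P.mem_part ha)⟩, ?_⟩
      rintro _ ⟨⟨p, hp, rfl⟩, hga⟩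
      obtain ⟨a', ha', hga'⟩ := mem_image.1 hga
      rw [← hg (P.le hp ha') ha hga', P.part_eq_of_mem hp ha'])
    (by simp)

theorem card_parts_imageOfInjOn [DecidableEq β] (P : Finpartition s) {g : α → β}
    (hg : Set.InjOn g s) : #(P.imageOfInjOn g hg).parts = #P.parts :=
  card_image_of_injOn <|
    (image_injOn_powerset_of_injOn hg).mono fun _ hp ↦ mem_powerset.2 (P.le hp)

theorem imageOfInjOn_injective [DecidableEq β] {g : α → β} (hg : Set.InjOn g s) :
    Function.Injective fun P : Finpartition s ↦ P.imageOfInjOn g hg := by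
  intro P Q hPQ
  have hsub (R : Finpartition s) : (R.parts : Set (Finset α)) ⊆ s.powerset :=
    fun _ hp ↦ mem_powerset.2 (R.le hp)
  ext1
  rw [← coe_inj, ← (image_injOn_powerset_of_injOn hg).image_eq_image_iff (hsub P) (hsub Q),
    ← coe_image, ← coe_image]
  exact congrArg (fun R : Finpartition (s.image g) ↦ (R.parts : Set (Finset β))) hPQ

end Finpartition

theorem Finset.exists_injOn_image_eq_range {α : Type*} [DecidableEq α] (s : Finset α) :
    ∃ g : α → ℕ, Set.InjOn g s ∧ s.image g = range #s := by
  let g (a : α) : ℕ := if h : a ∈ s then s.equivFin ⟨a, h⟩ else 0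
  have hg : Set.InjOn g s := fun a ha b hb h ↦ by
    simp only [g, dif_pos (mem_coe.1 ha), dif_pos (mem_coe.1 hb), Fin.val_inj] at h
    simpa using s.equivFin.injective h
  refine ⟨g, hg, eq_of_subset_of_card_le ?_ (by rw [card_image_of_injOn hg, card_range])⟩
  simp only [subset_iff, mem_image, mem_range, forall_exists_index, and_imp]
  rintro _ a ha rfl
  simp [g, ha]

theorem Finpartition.card_filter_card_parts_le_stirling {α : Type*} [DecidableEq α]
    (s : Finset α) (m : ℕ) : #{P : Finpartition s | #P.parts = m} ≤ stirling #s m := by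
  obtain ⟨g, hg, hgs⟩ := s.exists_injOn_image_eq_range
  calc #{P : Finpartition s | #P.parts = m}
      ≤ #{P : Finpartition (s.image g) | #P.parts = m} :=
        card_le_card_of_injOn _
          (fun P hP ↦ by simpa [Finpartition.card_parts_imageOfInjOn] using hP)
          (Finpartition.imageOfInjOn_injective hg).injOn
    _ = stirling #s m := by rw [hgs, stirling, Fintype.card_subtype]

theorem stirling_mul_factorial_le (n m : ℕ) : stirling n m * m ! ≤ m ^ n := by
  simpa [stirling, Fintype.card_subtype] using
    Finpartition.card_filter_card_parts_mul_factorial_le (range n) m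

section Norm

variable {A : Type*} [NormedCommRing A] [NormOneClass A]

theorem norm_neg_one_pow_mul_natCast_le (j m : ℕ) : ‖(-1 : A) ^ j * (m : A)‖ ≤ m :=
  calc ‖(-1 : A) ^ j * (m : A)‖ ≤ ‖(-1 : A)‖ ^ j * ‖(m : A)‖ :=
        (norm_mul_le _ _).trans (mul_le_mul_of_nonneg_right (norm_pow_le _ _) (norm_nonneg _))
    _ ≤ m := by simpa using Nat.norm_cast_le (α := A) m

theorem norm_prod_le_pow_card {ι : Type*} {s : Finset ι} {f : ι → A} {c : ℝ}
    (hf : ∀ i ∈ s, ‖f i‖ ≤ c) : ‖∏ i ∈ s, f i‖ ≤ c ^ #s :=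
  (Finset.norm_prod_le s f).trans <|
    (prod_le_prod (fun _ _ ↦ norm_nonneg _) hf).trans_eq (prod_const c)

theorem norm_prod_parts_le {β : Type*} [DecidableEq β] {s : Finset β} (Q : Finpartition s)
    {g : Finset β → A → A} (hg : ∀ Z a, ‖g Z a‖ ≤ ‖a‖) {f : β → A} {c : ℝ}
    (hf : ∀ X ∈ s, ‖f X‖ ≤ c) : ‖∏ Z ∈ Q.parts, g Z (∏ X ∈ Z, f X)‖ ≤ c ^ #s :=
  calc ‖∏ Z ∈ Q.parts, g Z (∏ X ∈ Z, f X)‖ ≤ ∏ Z ∈ Q.parts, c ^ #Z :=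
        (Finset.norm_prod_le _ _).trans <| prod_le_prod (fun _ _ ↦ norm_nonneg _) fun Z hZ ↦
          (hg _ _).trans (norm_prod_le_pow_card fun X hX ↦ hf X (Q.le hZ hX))
    _ = c ^ #s := by rw [prod_pow_eq_pow_sum, Q.sum_card_parts]

theorem norm_sum_cumulant_le {β : Type*} [DecidableEq β] {s : Finset β} (hs : s.Nonempty)
    {g : Finset β → A → A} (hg : ∀ Z a, ‖g Z a‖ ≤ ‖a‖) {f : β → A} {c : ℝ} (hc : 0 ≤ c)
    (hf : ∀ X ∈ s, ‖f X‖ ≤ c) :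
    ‖∑ Q : Finpartition s, ((-1 : A) ^ (#Q.parts - 1) * ((#Q.parts - 1)! : A)) *
        ∏ Z ∈ Q.parts, g Z (∏ X ∈ Z, f X)‖ ≤ c ^ #s * ∑ k ∈ Icc 1 #s, (k : ℝ) ^ (#s - 1) :=
  calc _ ≤ ∑ Q : Finpartition s, ((#Q.parts - 1)! : ℝ) * c ^ #s :=
        (norm_sum_le _ _).trans <| sum_le_sum fun Q _ ↦ (norm_mul_le _ _).trans <|
          mul_le_mul (norm_neg_one_pow_mul_natCast_le _ _) (norm_prod_parts_le Q hg hf)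
            (norm_nonneg _) (by positivity)
    _ ≤ c ^ #s * ∑ k ∈ Icc 1 #s, (k : ℝ) ^ (#s - 1) := by
        rw [← sum_mul, mul_comm]
        gcongr
        exact_mod_cast Finpartition.sum_factorial_card_parts_sub_one_le hs

theorem norm_clusterCumulantMap_le {α : Type*} [DecidableEq α] {G : Finset α → ℝ → (A →+ A)}
    (hG : ∀ X t a, ‖G X t a‖ ≤ ‖a‖) {c : ℝ} (hc : 0 ≤ c) {f : Finset α → A}
    (hf : ∀ X, ‖f X‖ ≤ c) (t : ℝ) {Y : Finset α} (hY : Y.Nonempty) :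
    ‖clusterCumulantMap G t f Y‖ ≤
      ∑ m ∈ Icc 1 #Y, (stirling #Y m : ℝ) * c ^ m * ∑ k ∈ Icc 1 m, (k : ℝ) ^ (m - 1) :=
  calc ‖clusterCumulantMap G t f Y‖
      ≤ ∑ P : Finpartition Y, c ^ #P.parts * ∑ k ∈ Icc 1 #P.parts, (k : ℝ) ^ (#P.parts - 1) :=
        (norm_sum_le _ _).trans <| sum_le_sum fun P _ ↦
          norm_sum_cumulant_le (P.parts_nonempty hY.ne_empty) (fun Z ↦ hG (Z.sup id) t) hc
            fun X _ ↦ hf X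
    _ = ∑ m ∈ Icc 1 #Y, (#{P : Finpartition Y | #P.parts = m} : ℝ) *
          (c ^ m * ∑ k ∈ Icc 1 m, (k : ℝ) ^ (m - 1)) := by
        simp only [Finpartition.sum_comp_card_parts hY fun m ↦ c ^ m *
          ∑ k ∈ Icc 1 m, (k : ℝ) ^ (m - 1), nsmul_eq_mul]
    _ ≤ _ := by
        simp only [mul_assoc]
        gcongr with m
        exact_mod_cast Finpartition.card_filter_card_parts_le_stirling Y m

end Norm

open Real

theorem pow_self_le_factorial_mul_exp (n : ℕ) : (n : ℝ) ^ n ≤ n ! * exp n := by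
  have := pow_div_factorial_le_exp _ (Nat.cast_nonneg n) n
  rwa [div_le_iff₀ (by positivity), mul_comm] at this

theorem sum_Icc_pow_sub_one_le (m : ℕ) : ∑ k ∈ Icc 1 m, (k : ℝ) ^ (m - 1) ≤ m ^ m := by
  calc ∑ k ∈ Icc 1 m, (k : ℝ) ^ (m - 1) ≤ ∑ _k ∈ Icc 1 m, (m : ℝ) ^ (m - 1) :=
        sum_le_sum fun k hk ↦ by gcongr; exact_mod_cast (mem_Icc.1 hk).2
    _ ≤ m ^ m := by
        rcases Nat.eq_zero_or_pos m with rfl | hm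
        · simp
        · rw [sum_const, Nat.card_Icc, Nat.add_sub_cancel, nsmul_eq_mul, mul_pow_sub_one hm.ne']

theorem stirling_mul_pow_self_le (n m : ℕ) : (stirling n m : ℝ) * m ^ m ≤ m ^ n * exp m := by
  have hstirling : (stirling n m : ℝ) * m ! ≤ m ^ n := by
    exact_mod_cast stirling_mul_factorial_le n m
  calc (stirling n m : ℝ) * m ^ m ≤ stirling n m * (m ! * exp m) := by
        gcongr; exact pow_self_le_factorial_mul_exp m
    _ = stirling n m * m ! * exp m := by ring
    _ ≤ m ^ n * exp m := by gcongr

theorem sum_stirling_mul_le (n : ℕ) {c : ℝ} (hc : 1 ≤ c) :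
    ∑ m ∈ Icc 1 n, (stirling n m : ℝ) * c ^ m * ∑ k ∈ Icc 1 m, (k : ℝ) ^ (m - 1) ≤
      n ! * exp 1 ^ (3 * n) * c ^ n := by
  have hterm : ∀ m ∈ Icc 1 n,
      (stirling n m : ℝ) * c ^ m * ∑ k ∈ Icc 1 m, (k : ℝ) ^ (m - 1) ≤ n ! * exp n ^ 2 * c ^ n := by
    intro m hm
    have hmn : m ≤ n := (mem_Icc.1 hm).2
    calc (stirling n m : ℝ) * c ^ m * ∑ k ∈ Icc 1 m, (k : ℝ) ^ (m - 1)
        ≤ stirling n m * m ^ m * c ^ n := by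
          rw [mul_right_comm]
          gcongr
          exact sum_Icc_pow_sub_one_le m
      _ ≤ m ^ n * exp m * c ^ n :=
          mul_le_mul_of_nonneg_right (stirling_mul_pow_self_le n m) (by positivity)
      _ ≤ n ^ n * exp n * c ^ n := by gcongr
      _ ≤ n ! * exp n * exp n * c ^ n := by gcongr; exact pow_self_le_factorial_mul_exp n
      _ = n ! * exp n ^ 2 * c ^ n := by ring
  calc _ ≤ ∑ _m ∈ Icc 1 n, (n ! : ℝ) * exp n ^ 2 * c ^ n := sum_le_sum hterm
    _ = n * (n ! * exp n ^ 2 * c ^ n) := by simp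
    _ ≤ exp n * (n ! * exp n ^ 2 * c ^ n) := by
        gcongr
        linarith [add_one_le_exp (n : ℝ)]
    _ = n ! * exp 1 ^ (3 * n) * c ^ n := by
        rw [← exp_one_pow]
        ring

/-- Norm estimate for the correlation solution: if the evolution groups are
isometries and every `f(X)` has norm at most `c` with `c ≥ 1`, then for `|Y| = n`
one has `‖(𝔄_t f)(Y)‖ ≤ Σ_{m=1}^{n} S(n,m) c^m Σ_{k=1}^{m} k^{m−1} ≤ n! e^{3n} c^n`. -/
theorem clusterCumulantMap_norm_estimate
    {α A : Type*} [DecidableEq α] [NormedCommRing A] [NormOneClass A]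
    (G : Finset α → ℝ → (A →+ A))
    (hGiso : ∀ (X : Finset α) (t : ℝ) (a : A), ‖G X t a‖ = ‖a‖)
    (c : ℝ) (hc : 1 ≤ c)
    (f : Finset α → A) (hf : ∀ X : Finset α, ‖f X‖ ≤ c)
    (t : ℝ) (Y : Finset α) (hY : Y.Nonempty) :
    ‖clusterCumulantMap G t f Y‖ ≤
        ∑ m ∈ Finset.Icc 1 Y.card, (stirling Y.card m : ℝ) * c ^ m *
          ∑ k ∈ Finset.Icc 1 m, (k : ℝ) ^ (m - 1) ∧
      (∑ m ∈ Finset.Icc 1 Y.card, (stirling Y.card m : ℝ) * c ^ m *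
          ∑ k ∈ Finset.Icc 1 m, (k : ℝ) ^ (m - 1)) ≤
        (Y.card.factorial : ℝ) * Real.exp 1 ^ (3 * Y.card) * c ^ Y.card :=
  ⟨norm_clusterCumulantMap_le (fun X t a ↦ (hGiso X t a).le) (zero_le_one.trans hc) hf t hY,
    sum_stirling_mul_le Y.card hc⟩
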